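/- Let p be a probability mass function on 𝒳 × 𝒴 × 𝒲 × 𝒵. Then C_Y ⊆ C_{(Y,W)} (every conditional p(·|y) is a convex combination of the conditionals p(·|y,w)), hence for every x with p(x) > 0, inf_{q ∈ C_{(Y,W)}} D(p(·|x)‖q) ≤ inf_{q ∈ C_Y} D(p(·|x)‖q); consequently I_pr(X↘Y;Z) ≤ I_pr(X↘(Y,W);Z). -/
import Mathlib


open scoped BigOperators

/-- `p` is a probability mass function on a finite type. -/
def IsPMF {α : Type*} [Fintype α] (p : α → ℝ) : Prop :=
  (∀ a, 0 ≤ p a) ∧ ∑ a, p a = 1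

/-- Kullback–Leibler divergence `D(u‖v) = Σ u log (u/v)` (with the convention `0 log 0 = 0`),
`⊤` if absolute continuity fails, i.e. if `u a > 0 = v a` for some `a`. -/
noncomputable def klDiv {α : Type*} [Fintype α] (u v : α → ℝ) : EReal :=
  if ∀ a, 0 < u a → 0 < v a then ((∑ a, u a * Real.log (u a / v a) : ℝ) : EReal) else ⊤

variable {𝓧 𝓨 𝓦 𝓩 : Type*} [Fintype 𝓧] [Fintype 𝓨] [Fintype 𝓦] [Fintype 𝓩]

/-- Marginal `p(x)`. -/
noncomputable def margX (p : 𝓧 × 𝓨 × 𝓦 × 𝓩 → ℝ) (x : 𝓧) : ℝ :=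
  ∑ y, ∑ w, ∑ z, p (x, y, w, z)

/-- Marginal `p(y)`. -/
noncomputable def margY (p : 𝓧 × 𝓨 × 𝓦 × 𝓩 → ℝ) (y : 𝓨) : ℝ :=
  ∑ x, ∑ w, ∑ z, p (x, y, w, z)

/-- Marginal `p(y,w)` of the joint variable `(Y,W)`. -/
noncomputable def margYW (p : 𝓧 × 𝓨 × 𝓦 × 𝓩 → ℝ) (y : 𝓨) (w : 𝓦) : ℝ :=
  ∑ x, ∑ z, p (x, y, w, z)

/-- Marginal `p(z)`. -/
noncomputable def margZ (p : 𝓧 × 𝓨 × 𝓦 × 𝓩 → ℝ) (z : 𝓩) : ℝ :=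
  ∑ x, ∑ y, ∑ w, p (x, y, w, z)

/-- Joint marginal `p(x,z)`. -/
noncomputable def margXZ (p : 𝓧 × 𝓨 × 𝓦 × 𝓩 → ℝ) (x : 𝓧) (z : 𝓩) : ℝ :=
  ∑ y, ∑ w, p (x, y, w, z)

/-- Joint marginal `p(y,z)`. -/
noncomputable def margYZ (p : 𝓧 × 𝓨 × 𝓦 × 𝓩 → ℝ) (y : 𝓨) (z : 𝓩) : ℝ :=
  ∑ x, ∑ w, p (x, y, w, z)

/-- Joint marginal `p(y,w,z)`. -/
noncomputable def margYWZ (p : 𝓧 × 𝓨 × 𝓦 × 𝓩 → ℝ) (y : 𝓨) (w : 𝓦) (z : 𝓩) : ℝ :=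
  ∑ x, p (x, y, w, z)

/-- Conditional distribution `p(·|x)` of `Z` given `X = x`. -/
noncomputable def condX (p : 𝓧 × 𝓨 × 𝓦 × 𝓩 → ℝ) (x : 𝓧) : 𝓩 → ℝ :=
  fun z => margXZ p x z / margX p x

/-- Conditional distribution `p(·|y)` of `Z` given `Y = y`. -/
noncomputable def condY (p : 𝓧 × 𝓨 × 𝓦 × 𝓩 → ℝ) (y : 𝓨) : 𝓩 → ℝ :=
  fun z => margYZ p y z / margY p y

/-- Conditional distribution `p(·|y,w)` of `Z` given `(Y,W) = (y,w)`. -/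
noncomputable def condYW (p : 𝓧 × 𝓨 × 𝓦 × 𝓩 → ℝ) (y : 𝓨) (w : 𝓦) : 𝓩 → ℝ :=
  fun z => margYWZ p y w z / margYW p y w

/-- `C_X`: convex hull of `{p(·|x) : p(x) > 0}`. -/
noncomputable def CXhull (p : 𝓧 × 𝓨 × 𝓦 × 𝓩 → ℝ) : Set (𝓩 → ℝ) :=
  convexHull ℝ {q | ∃ x, 0 < margX p x ∧ q = condX p x}

/-- `C_Y`: convex hull of `{p(·|y) : p(y) > 0}`. -/
noncomputable def CYhull (p : 𝓧 × 𝓨 × 𝓦 × 𝓩 → ℝ) : Set (𝓩 → ℝ) :=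
  convexHull ℝ {q | ∃ y, 0 < margY p y ∧ q = condY p y}

/-- `C_{(Y,W)}`: convex hull of `{p(·|y,w) : p(y,w) > 0}`. -/
noncomputable def CYWhull (p : 𝓧 × 𝓨 × 𝓦 × 𝓩 → ℝ) : Set (𝓩 → ℝ) :=
  convexHull ℝ {q | ∃ y w, 0 < margYW p y w ∧ q = condYW p y w}

/-- Projected information `I_pr(X ↘ Y; Z)`. -/
noncomputable def IprXY (p : 𝓧 × 𝓨 × 𝓦 × 𝓩 → ℝ) : ℝ :=
  ∑ x, if 0 < margX p x then
      margX p x * ((klDiv (condX p x) (margZ p)).toReal -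
        (⨅ q ∈ CYhull p, klDiv (condX p x) q).toReal)
    else 0

/-- Projected information `I_pr(X ↘ (Y,W); Z)`. -/
noncomputable def IprXYW (p : 𝓧 × 𝓨 × 𝓦 × 𝓩 → ℝ) : ℝ :=
  ∑ x, if 0 < margX p x then
      margX p x * ((klDiv (condX p x) (margZ p)).toReal -
        (⨅ q ∈ CYWhull p, klDiv (condX p x) q).toReal)
    else 0

/-- Projected information `I_pr(Y ↘ X; Z)`. -/
noncomputable def IprYX (p : 𝓧 × 𝓨 × 𝓦 × 𝓩 → ℝ) : ℝ :=
  ∑ y, if 0 < margY p y then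
      margY p y * ((klDiv (condY p y) (margZ p)).toReal -
        (⨅ q ∈ CXhull p, klDiv (condY p y) q).toReal)
    else 0

/-- Projected information `I_pr((Y,W) ↘ X; Z)`, treating `(Y,W)` as a single variable. -/
noncomputable def IprYWX (p : 𝓧 × 𝓨 × 𝓦 × 𝓩 → ℝ) : ℝ :=
  ∑ y, ∑ w, if 0 < margYW p y w then
      margYW p y w * ((klDiv (condYW p y w) (margZ p)).toReal -
        (⨅ q ∈ CXhull p, klDiv (condYW p y w) q).toReal)
    else 0

/-- Redundant information `I_red(Z;X,Y)`. -/
noncomputable def IredXY (p : 𝓧 × 𝓨 × 𝓦 × 𝓩 → ℝ) : ℝ := min (IprXY p) (IprYX p)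

/-- Redundant information `I_red(Z;X,(Y,W))`, treating `(Y,W)` as a single variable. -/
noncomputable def IredXYW (p : 𝓧 × 𝓨 × 𝓦 × 𝓩 → ℝ) : ℝ := min (IprXYW p) (IprYWX p)


section Aux

variable {p : 𝓧 × 𝓨 × 𝓦 × 𝓩 → ℝ}

lemma marg_nonneg (hp0 : ∀ a, 0 ≤ p a) :
    (∀ x, 0 ≤ margX p x) ∧ (∀ y, 0 ≤ margY p y) ∧ (∀ y w, 0 ≤ margYW p y w) ∧
    (∀ z, 0 ≤ margZ p z) ∧ (∀ x z, 0 ≤ margXZ p x z) ∧ (∀ y z, 0 ≤ margYZ p y z) ∧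
    (∀ y w z, 0 ≤ margYWZ p y w z) := by
  refine ⟨?_, ?_, ?_, ?_, ?_, ?_, ?_⟩ <;> intros <;>
    simp only [margX, margY, margYW, margZ, margXZ, margYZ, margYWZ] <;>
    first
    | exact Finset.sum_nonneg fun _ _ => Finset.sum_nonneg fun _ _ =>
        Finset.sum_nonneg fun _ _ => hp0 _
    | exact Finset.sum_nonneg fun _ _ => Finset.sum_nonneg fun _ _ => hp0 _
    | exact Finset.sum_nonneg fun _ _ => hp0 _

lemma sum_margYW (p : 𝓧 × 𝓨 × 𝓦 × 𝓩 → ℝ) (y : 𝓨) : ∑ w, margYW p y w = margY p y := by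
  unfold margYW margY; exact Finset.sum_comm

lemma sum_margYWZ (p : 𝓧 × 𝓨 × 𝓦 × 𝓩 → ℝ) (y : 𝓨) (w : 𝓦) :
    ∑ z, margYWZ p y w z = margYW p y w := by
  unfold margYWZ margYW; exact Finset.sum_comm

lemma sum_w_margYWZ (p : 𝓧 × 𝓨 × 𝓦 × 𝓩 → ℝ) (y : 𝓨) (z : 𝓩) :
    ∑ w, margYWZ p y w z = margYZ p y z := by
  unfold margYWZ margYZ; exact Finset.sum_comm

lemma sum_margYZ (p : 𝓧 × 𝓨 × 𝓦 × 𝓩 → ℝ) (y : 𝓨) : ∑ z, margYZ p y z = margY p y := by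
  unfold margYZ margY
  rw [Finset.sum_comm]
  exact Finset.sum_congr rfl fun x _ => Finset.sum_comm

lemma sum_y_margYZ (p : 𝓧 × 𝓨 × 𝓦 × 𝓩 → ℝ) (z : 𝓩) : ∑ y, margYZ p y z = margZ p z := by
  unfold margYZ margZ; exact Finset.sum_comm

lemma sum_margXZ (p : 𝓧 × 𝓨 × 𝓦 × 𝓩 → ℝ) (x : 𝓧) : ∑ z, margXZ p x z = margX p x := by
  unfold margXZ margX
  rw [Finset.sum_comm]
  exact Finset.sum_congr rfl fun y _ => Finset.sum_comm

lemma margXZ_le_margZ (hp0 : ∀ a, 0 ≤ p a) (x : 𝓧) (z : 𝓩) : margXZ p x z ≤ margZ p z := by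
  unfold margXZ margZ
  exact Finset.single_le_sum (f := fun x => ∑ y, ∑ w, p (x, y, w, z))
    (fun i _ => Finset.sum_nonneg fun _ _ => Finset.sum_nonneg fun _ _ => hp0 _)
    (Finset.mem_univ x)

lemma sum_margY (hp : IsPMF p) : ∑ y, margY p y = 1 := by
  have h := hp.2
  simp only [Fintype.sum_prod_type] at h
  rw [← h]
  simp only [margY]
  exact Finset.sum_comm

lemma margYWZ_eq_zero (hp0 : ∀ a, 0 ≤ p a) {y : 𝓨} {w : 𝓦} (h : margYW p y w = 0) (z : 𝓩) :
    margYWZ p y w z = 0 := by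
  have h1 := sum_margYWZ p y w
  have h2 := (marg_nonneg hp0).2.2.2.2.2.2
  have := Finset.single_le_sum (f := fun z => margYWZ p y w z) (fun i _ => h2 y w i)
    (Finset.mem_univ z)
  rw [h1, h] at this
  linarith [h2 y w z]

lemma margYZ_eq_zero (hp0 : ∀ a, 0 ≤ p a) {y : 𝓨} (h : margY p y = 0) (z : 𝓩) :
    margYZ p y z = 0 := by
  have h1 := sum_margYZ p y
  have h2 := (marg_nonneg hp0).2.2.2.2.2.1
  have := Finset.single_le_sum (f := fun z => margYZ p y z) (fun i _ => h2 y i)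
    (Finset.mem_univ z)
  rw [h1, h] at this
  linarith [h2 y z]

/-- The simplex, as a convex set. -/
lemma convex_simplex : Convex ℝ {q : 𝓩 → ℝ | (∀ z, 0 ≤ q z) ∧ ∑ z, q z = 1} := by
  intro a ha b hb s t hs ht hst
  constructor
  · intro z
    have := ha.1 z; have := hb.1 z
    simp only [Pi.add_apply, Pi.smul_apply, smul_eq_mul]
    positivity
  · simp only [Pi.add_apply, Pi.smul_apply, smul_eq_mul]
    rw [Finset.sum_add_distrib, ← Finset.mul_sum, ← Finset.mul_sum, ha.2, hb.2]
    linarith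

lemma condYW_mem_simplex (hp0 : ∀ a, 0 ≤ p a) {y : 𝓨} {w : 𝓦} (h : 0 < margYW p y w) :
    (∀ z, 0 ≤ condYW p y w z) ∧ ∑ z, condYW p y w z = 1 := by
  have h2 := (marg_nonneg hp0).2.2.2.2.2.2
  constructor
  · intro z; exact div_nonneg (h2 y w z) h.le
  · unfold condYW
    rw [← Finset.sum_div, sum_margYWZ, div_self h.ne']

lemma condY_mem_simplex (hp0 : ∀ a, 0 ≤ p a) {y : 𝓨} (h : 0 < margY p y) :
    (∀ z, 0 ≤ condY p y z) ∧ ∑ z, condY p y z = 1 := by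
  have h2 := (marg_nonneg hp0).2.2.2.2.2.1
  constructor
  · intro z; exact div_nonneg (h2 y z) h.le
  · unfold condY
    rw [← Finset.sum_div, sum_margYZ, div_self h.ne']

lemma condX_mem_simplex (hp0 : ∀ a, 0 ≤ p a) {x : 𝓧} (h : 0 < margX p x) :
    (∀ z, 0 ≤ condX p x z) ∧ ∑ z, condX p x z = 1 := by
  have h2 := (marg_nonneg hp0).2.2.2.2.1
  constructor
  · intro z; exact div_nonneg (h2 x z) h.le
  · unfold condX
    rw [← Finset.sum_div, sum_margXZ, div_self h.ne']

lemma CYWhull_subset_simplex (hp0 : ∀ a, 0 ≤ p a) :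
    CYWhull p ⊆ {q : 𝓩 → ℝ | (∀ z, 0 ≤ q z) ∧ ∑ z, q z = 1} := by
  refine convexHull_min ?_ convex_simplex
  rintro q ⟨y, w, hyw, rfl⟩
  exact condYW_mem_simplex hp0 hyw

/-- Gibbs' inequality. -/
lemma klDiv_nonneg' {α : Type*} [Fintype α] {u v : α → ℝ}
    (hu0 : ∀ a, 0 ≤ u a) (hu1 : ∑ a, u a = 1)
    (hv0 : ∀ a, 0 ≤ v a) (hv1 : ∑ a, v a = 1) :
    (0 : EReal) ≤ klDiv u v := by
  unfold klDiv
  split_ifs with h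
  · have key : ∀ a, u a - v a ≤ u a * Real.log (u a / v a) := by
      intro a
      rcases eq_or_lt_of_le (hu0 a) with h0 | h0
      · rw [← h0]; simp; exact hv0 a
      · have hv := h a h0
        have hlog : Real.log (v a / u a) ≤ v a / u a - 1 :=
          Real.log_le_sub_one_of_pos (by positivity)
        have hdiv : Real.log (u a / v a) = -Real.log (v a / u a) := by
          rw [Real.log_div h0.ne' hv.ne', Real.log_div hv.ne' h0.ne']; ring
        have huv : u a * (v a / u a) = v a := by field_simp
        nlinarith [h0.le]
    have : (0 : ℝ) ≤ ∑ a, u a * Real.log (u a / v a) := by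
      have := Finset.sum_le_sum (fun a (_ : a ∈ Finset.univ) => key a)
      rw [Finset.sum_sub_distrib, hu1, hv1] at this
      linarith
    exact_mod_cast this
  · exact le_top

lemma condY_mem_CYWhull (hp0 : ∀ a, 0 ≤ p a) {y : 𝓨} (hy : 0 < margY p y) :
    condY p y ∈ CYWhull p := by
  classical
  unfold CYWhull
  set t : Finset 𝓦 := Finset.univ.filter fun w => 0 < margYW p y w with ht
  have hW := (marg_nonneg hp0).2.2.1
  have hsum : ∑ w ∈ t, margYW p y w = margY p y := by
    rw [ht, Finset.sum_filter_of_ne, sum_margYW]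
    intro w _ hw
    exact lt_of_le_of_ne (hW y w) (Ne.symm hw)
  have hmem := Finset.centerMass_mem_convexHull (s := {q | ∃ y w, 0 < margYW p y w ∧ q = condYW p y w}) (t := t) (w := fun w => margYW p y w)
    (z := fun w => condYW p y w) (fun w _ => hW y w) (by rw [hsum]; exact hy)
    (fun w hw => ⟨y, w, (Finset.mem_filter.mp hw).2, rfl⟩)
  have heq : t.centerMass (fun w => margYW p y w) (fun w => condYW p y w) = condY p y := by
    funext z
    rw [Finset.centerMass, hsum]
    simp only [Pi.smul_apply, Finset.sum_apply, smul_eq_mul]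
    have hterm : ∑ w ∈ t, margYW p y w * condYW p y w z = margYZ p y z := by
      have : ∀ w ∈ t, margYW p y w * condYW p y w z = margYWZ p y w z := by
        intro w hw
        have hpos := (Finset.mem_filter.mp hw).2
        unfold condYW
        field_simp
      rw [Finset.sum_congr rfl this, ht, Finset.sum_filter_of_ne, sum_w_margYWZ]
      intro w _ hw
      by_contra hc
      push_neg at hc
      have h0 : margYW p y w = 0 := le_antisymm hc (hW y w)
      exact hw (margYWZ_eq_zero hp0 h0 z)
    rw [hterm]
    unfold condY
    rw [inv_mul_eq_div]
  rwa [heq] at hmem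

lemma margZ_mem_CYhull (hp : IsPMF p) : margZ p ∈ CYhull p := by
  classical
  unfold CYhull
  have hp0 := hp.1
  set t : Finset 𝓨 := Finset.univ.filter fun y => 0 < margY p y with ht
  have hY := (marg_nonneg hp0).2.1
  have hsum : ∑ y ∈ t, margY p y = 1 := by
    rw [ht, Finset.sum_filter_of_ne, sum_margY hp]
    intro y _ hy
    exact lt_of_le_of_ne (hY y) (Ne.symm hy)
  have hmem := Finset.centerMass_mem_convexHull (s := {q | ∃ y, 0 < margY p y ∧ q = condY p y}) (t := t) (w := fun y => margY p y)
    (z := fun y => condY p y) (fun y _ => hY y) (by rw [hsum]; norm_num)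
    (fun y hy => ⟨y, (Finset.mem_filter.mp hy).2, rfl⟩)
  have heq : t.centerMass (fun y => margY p y) (fun y => condY p y) = margZ p := by
    funext z
    rw [Finset.centerMass, hsum]
    simp only [Pi.smul_apply, Finset.sum_apply, smul_eq_mul, inv_one, one_smul]
    have : ∀ y ∈ t, margY p y * condY p y z = margYZ p y z := by
      intro y hy
      have hpos := (Finset.mem_filter.mp hy).2
      unfold condY
      field_simp
    rw [Finset.sum_congr rfl this, ht, Finset.sum_filter_of_ne, sum_y_margYZ, one_mul]
    intro y _ hy
    by_contra hc
    push_neg at hc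
    have h0 : margY p y = 0 := le_antisymm hc (hY y)
    exact hy (margYZ_eq_zero hp0 h0 z)
  rwa [heq] at hmem

lemma klDiv_condX_margZ_ne_top (hp0 : ∀ a, 0 ≤ p a) {x : 𝓧} (hx : 0 < margX p x) :
    klDiv (condX p x) (margZ p) ≠ ⊤ := by
  unfold klDiv
  rw [if_pos]
  · exact EReal.coe_ne_top _
  · intro z hz
    have hXZ : 0 < margXZ p x z := by
      by_contra hc
      push_neg at hc
      have h0 : margXZ p x z = 0 := le_antisymm hc ((marg_nonneg hp0).2.2.2.2.1 x z)
      unfold condX at hz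
      rw [h0] at hz
      simp at hz
    exact hXZ.trans_le (margXZ_le_margZ hp0 x z)

end Aux

/-- `C_Y ⊆ C_{(Y,W)}`, hence for every `x` with `p(x) > 0` the infimum over `C_{(Y,W)}` is
at most the infimum over `C_Y`; consequently `I_pr(X↘Y;Z) ≤ I_pr(X↘(Y,W);Z)`. -/

theorem IprXY_le_IprXYW
    [Nonempty 𝓧] [Nonempty 𝓨] [Nonempty 𝓦] [Nonempty 𝓩]
    (p : 𝓧 × 𝓨 × 𝓦 × 𝓩 → ℝ) (hp : IsPMF p) :
    CYhull p ⊆ CYWhull p ∧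
      (∀ x, 0 < margX p x →
        (⨅ q ∈ CYWhull p, klDiv (condX p x) q) ≤ ⨅ q ∈ CYhull p, klDiv (condX p x) q) ∧
      IprXY p ≤ IprXYW p := by
  have hp0 := hp.1
  have hsub : CYhull p ⊆ CYWhull p := by
    refine convexHull_min ?_ (convex_convexHull ℝ _)
    rintro q ⟨y, hy, rfl⟩
    exact condY_mem_CYWhull hp0 hy
  have hinf : ∀ x, 0 < margX p x →
      (⨅ q ∈ CYWhull p, klDiv (condX p x) q) ≤ ⨅ q ∈ CYhull p, klDiv (condX p x) q :=
    fun x _ => iInf_le_iInf_of_subset hsub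
  refine ⟨hsub, hinf, ?_⟩
  unfold IprXY IprXYW
  refine Finset.sum_le_sum fun x _ => ?_
  split_ifs with hx
  · set b := ⨅ q ∈ CYhull p, klDiv (condX p x) q with hb
    set c := ⨅ q ∈ CYWhull p, klDiv (condX p x) q with hc
    have hbtop : b ≠ ⊤ := by
      refine ne_top_of_le_ne_top (klDiv_condX_margZ_ne_top hp0 hx) ?_
      exact iInf₂_le (margZ p) (margZ_mem_CYhull hp)
    have hcx := condX_mem_simplex hp0 hx
    have hc0 : (0 : EReal) ≤ c := by
      refine le_iInf₂ fun q hq => ?_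
      obtain ⟨hq0, hq1⟩ := CYWhull_subset_simplex hp0 hq
      exact klDiv_nonneg' hcx.1 hcx.2 hq0 hq1
    have hcbot : c ≠ ⊥ := fun h => by rw [h] at hc0; exact (not_le.mpr (bot_lt_iff_ne_bot.mpr (by simp))) hc0
    have htr : c.toReal ≤ b.toReal :=
      EReal.toReal_le_toReal (hinf x hx) hcbot hbtop
    have : (klDiv (condX p x) (margZ p)).toReal - b.toReal ≤
        (klDiv (condX p x) (margZ p)).toReal - c.toReal := by linarith
    exact mul_le_mul_of_nonneg_left this hx.le
  · exact le_refl _
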